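/- arXiv:2305.07026 — 3 statements merged into one kernel-verified Lean document; each statement's English description precedes it below -/
import Mathlib

section
/- Let ρ : ℝ≥0 → ℝ be differentiable, concave, nondecreasing. Fix a current iterate (R₀, t₀, l₀) with R₀ ∈ SO(3), l₀ ≠ t₀, and a vector p₀ ∈ ℝ³ (all constants), and set λ₀ = (l₀−t₀)ᵀR₀p₀/‖l₀−t₀‖², g₀ = ½R₀p₀ + ½λ₀t₀ + ½λ₀l₀, e₀ = (I − R₀ᵀ(l₀−t₀)(l₀−t₀)ᵀR₀/‖l₀−t₀‖²)p₀, w₀ = ρ'(‖e₀‖²), a₀ = ½ρ(‖e₀‖²) − ½ρ'(‖e₀‖²)‖e₀‖². Then for all R ∈ SO(3), t, l ∈ ℝ³ with l ≠ t, ½ρ(‖e(R,t,l)‖²) ≤ w₀‖Rp₀ + λ₀t − g₀‖² + ½a₀ + w₀‖λ₀l − g₀‖² + ½a₀, where e(R,t,l) = (I − Rᵀ(l−t)(l−t)ᵀR/‖l−t‖²)p₀; moreover equality holds at (R,t,l) = (R₀,t₀,l₀). -/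
open Matrix
open scoped InnerProductSpace

/-- Apply a `3 × 3` real matrix to a vector of `EuclideanSpace ℝ (Fin 3)`. -/
noncomputable def mv (A : Matrix (Fin 3) (Fin 3) ℝ) (v : EuclideanSpace ℝ (Fin 3)) :
    EuclideanSpace ℝ (Fin 3) :=
  (WithLp.equiv 2 (Fin 3 → ℝ)).symm (A.mulVec ((WithLp.equiv 2 (Fin 3 → ℝ)) v))

/-- The outer product `v vᵀ` of a vector with itself, as a `3 × 3` matrix. -/
noncomputable def outer (v : EuclideanSpace ℝ (Fin 3)) : Matrix (Fin 3) (Fin 3) ℝ :=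
  Matrix.vecMulVec ((WithLp.equiv 2 (Fin 3 → ℝ)) v) ((WithLp.equiv 2 (Fin 3 → ℝ)) v)

/-- The reprojection error `e = (I − Rᵀ(l−t)(l−t)ᵀR/‖l−t‖²) p`. -/
noncomputable def reprojErr (R : Matrix (Fin 3) (Fin 3) ℝ)
    (t l p : EuclideanSpace ℝ (Fin 3)) : EuclideanSpace ℝ (Fin 3) :=
  mv (1 - (‖l - t‖ ^ 2)⁻¹ • (Rᵀ * outer (l - t) * R)) p


lemma mv_one (v : EuclideanSpace ℝ (Fin 3)) : mv 1 v = v := by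
  simp [mv]

lemma mv_sub (A B : Matrix (Fin 3) (Fin 3) ℝ) (v : EuclideanSpace ℝ (Fin 3)) :
    mv (A - B) v = mv A v - mv B v := by
  simp [mv, Matrix.sub_mulVec]

lemma mv_smulM (c : ℝ) (A : Matrix (Fin 3) (Fin 3) ℝ) (v : EuclideanSpace ℝ (Fin 3)) :
    mv (c • A) v = c • mv A v := by
  simp [mv, Matrix.smul_mulVec]

lemma mv_mul (A B : Matrix (Fin 3) (Fin 3) ℝ) (v : EuclideanSpace ℝ (Fin 3)) :
    mv (A * B) v = mv A (mv B v) := by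
  simp [mv, Matrix.mulVec_mulVec]

lemma inner_mv (u v : EuclideanSpace ℝ (Fin 3)) (A : Matrix (Fin 3) (Fin 3) ℝ) :
    ⟪u, mv A v⟫_ℝ = ((WithLp.equiv 2 (Fin 3 → ℝ)) u) ⬝ᵥ (A.mulVec ((WithLp.equiv 2 (Fin 3 → ℝ)) v)) := by
  simp [mv, PiLp.inner_apply, dotProduct, RCLike.inner_apply]
  exact Finset.sum_congr rfl (fun _ _ => mul_comm _ _)

lemma inner_eq_dot (u v : EuclideanSpace ℝ (Fin 3)) :
    ⟪u, v⟫_ℝ = ((WithLp.equiv 2 (Fin 3 → ℝ)) u) ⬝ᵥ ((WithLp.equiv 2 (Fin 3 → ℝ)) v) := by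
  simp [PiLp.inner_apply, dotProduct, RCLike.inner_apply]
  exact Finset.sum_congr rfl (fun _ _ => mul_comm _ _)

lemma mv_outer (u v : EuclideanSpace ℝ (Fin 3)) :
    mv (outer u) v = ⟪u, v⟫_ℝ • u := by
  apply (WithLp.equiv 2 (Fin 3 → ℝ)).symm.injective.eq_iff.mpr
  ext i
  simp only [mv, outer, Matrix.mulVec, Matrix.vecMulVec, dotProduct, Matrix.of_apply,
    WithLp.equiv_symm_apply, WithLp.equiv_apply, PiLp.toLp_apply, inner_eq_dot, dotProduct]
  show (∑ x, u i * u x * v x) = (∑ x, u x * v x) * u i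
  rw [Finset.sum_mul]
  exact Finset.sum_congr rfl (fun x _ => by ring)

lemma norm_sq_mv (R : Matrix (Fin 3) (Fin 3) ℝ) (hR : Rᵀ * R = 1) (v : EuclideanSpace ℝ (Fin 3)) :
    ‖mv R v‖ ^ 2 = ‖v‖ ^ 2 := by
  rw [← real_inner_self_eq_norm_sq, ← real_inner_self_eq_norm_sq, inner_mv]
  rw [show (WithLp.equiv 2 (Fin 3 → ℝ)) (mv R v) = R.mulVec ((WithLp.equiv 2 (Fin 3 → ℝ)) v) from rfl]
  rw [Matrix.dotProduct_mulVec, ← Matrix.mulVec_transpose, Matrix.mulVec_mulVec, hR,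
    Matrix.one_mulVec, inner_eq_dot]

lemma mv_vsub (A : Matrix (Fin 3) (Fin 3) ℝ) (x y : EuclideanSpace ℝ (Fin 3)) :
    mv A (x - y) = mv A x - mv A y := by
  simp [mv, Matrix.mulVec_sub]

lemma mv_vsmul (A : Matrix (Fin 3) (Fin 3) ℝ) (c : ℝ) (x : EuclideanSpace ℝ (Fin 3)) :
    mv A (c • x) = c • mv A x := by
  simp [mv, Matrix.mulVec_smul]

lemma reproj_norm (R : Matrix (Fin 3) (Fin 3) ℝ) (hR : Rᵀ * R = 1)
    (t l p : EuclideanSpace ℝ (Fin 3)) :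
    ‖reprojErr R t l p‖ ^ 2
      = ‖mv R p - (⟪l - t, mv R p⟫_ℝ / ‖l - t‖ ^ 2) • (l - t)‖ ^ 2 := by
  have hRR : R * Rᵀ = 1 := mul_eq_one_comm.mp hR
  have h1 : reprojErr R t l p
      = p - ((‖l - t‖ ^ 2)⁻¹ * ⟪l - t, mv R p⟫_ℝ) • mv Rᵀ (l - t) := by
    rw [reprojErr, mv_sub, mv_one, mv_smulM, Matrix.mul_assoc, mv_mul, mv_mul, mv_outer,
      mv_vsmul, smul_smul]
  have h2 : mv R (reprojErr R t l p)
      = mv R p - ((‖l - t‖ ^ 2)⁻¹ * ⟪l - t, mv R p⟫_ℝ) • (l - t) := by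
    rw [h1, mv_vsub, mv_vsmul, ← mv_mul, hRR, mv_one]
  rw [← norm_sq_mv R hR, h2, div_eq_inv_mul]

lemma proj_min (u v : EuclideanSpace ℝ (Fin 3)) (hu : u ≠ 0) (lam : ℝ) :
    ‖v - (⟪u, v⟫_ℝ / ‖u‖ ^ 2) • u‖ ^ 2 ≤ ‖v - lam • u‖ ^ 2 := by
  have hn : (0:ℝ) < ‖u‖ ^ 2 := by
    have := norm_pos_iff.mpr hu
    positivity
  rw [norm_sub_sq_real, norm_sub_sq_real, real_inner_smul_right, real_inner_smul_right,
    norm_smul, norm_smul, mul_pow, mul_pow]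
  rw [Real.norm_eq_abs, sq_abs, Real.norm_eq_abs, sq_abs]
  set n := ‖u‖ ^ 2 with hn'
  rw [show ⟪v, u⟫_ℝ = ⟪u, v⟫_ℝ from real_inner_comm u v]
  set c := ⟪u, v⟫_ℝ with hc
  have e1 : c / n * c = c ^ 2 / n := by ring
  have e2 : (c / n) ^ 2 * n = c ^ 2 / n := by
    field_simp
  have e3 : c ^ 2 / n * n = c ^ 2 := div_mul_cancel₀ _ hn.ne'
  rw [e1, e2]
  nlinarith [sq_nonneg (lam * n - c), hn, e3]

lemma tangent (ρ ρ' : ℝ → ℝ)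
    (hdiff : ∀ s : ℝ, 0 ≤ s → HasDerivAt ρ (ρ' s) s)
    (hconc : ConcaveOn ℝ (Set.Ici (0 : ℝ)) ρ)
    {s s₀ : ℝ} (hs : 0 ≤ s) (hs₀ : 0 ≤ s₀) :
    ρ s ≤ ρ s₀ + ρ' s₀ * (s - s₀) := by
  rcases lt_trichotomy s s₀ with h | h | h
  · have := hconc.le_slope_of_hasDerivWithinAt (x := s) (y := s₀) hs hs₀ h
      ((hdiff s₀ hs₀).hasDerivWithinAt)
    rw [slope_def_field] at this
    have hd : s - s₀ < 0 := by linarith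
    rw [le_div_iff₀ (by linarith : (0:ℝ) < s₀ - s)] at this
    nlinarith
  · simp [h]
  · have := hconc.slope_le_of_hasDerivAt (x := s₀) (y := s) hs₀ hs h (hdiff s₀ hs₀)
    rw [slope_def_field] at this
    rw [div_le_iff₀ (by linarith : (0:ℝ) < s - s₀)] at this
    nlinarith

lemma sq_split {x a b : ℝ} (h : x ≤ a + b) (ha : 0 ≤ a) (hb : 0 ≤ b) (hx : 0 ≤ x) :
    x ^ 2 ≤ 2 * a ^ 2 + 2 * b ^ 2 := by
  nlinarith [sq_nonneg (a - b)]

lemma combine {rs rs0 w s s0 a A B : ℝ} (h3 : rs ≤ rs0 + w * (s - s0))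
    (hC : s ≤ 2 * A ^ 2 + 2 * B ^ 2) (hw : 0 ≤ w)
    (ha : a = (1/2) * rs0 - (1/2) * w * s0) :
    (1/2) * rs ≤ w * A ^ 2 + (1/2) * a + (w * B ^ 2 + (1/2) * a) := by
  nlinarith [mul_le_mul_of_nonneg_left hC hw]

theorem stmt5 (ρ ρ' : ℝ → ℝ)
    (hdiff : ∀ s : ℝ, 0 ≤ s → HasDerivAt ρ (ρ' s) s)
    (hconc : ConcaveOn ℝ (Set.Ici (0 : ℝ)) ρ)
    (hmono : MonotoneOn ρ (Set.Ici (0 : ℝ)))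
    (R₀ : Matrix (Fin 3) (Fin 3) ℝ) (hR₀ : R₀ᵀ * R₀ = 1) (hdet₀ : R₀.det = 1)
    (t₀ l₀ p₀ : EuclideanSpace ℝ (Fin 3)) (h₀ : l₀ ≠ t₀)
    (lam₀ w₀ a₀ : ℝ) (g₀ e₀ : EuclideanSpace ℝ (Fin 3))
    (hlam₀ : lam₀ = ⟪l₀ - t₀, mv R₀ p₀⟫_ℝ / ‖l₀ - t₀‖ ^ 2)
    (hg₀ : g₀ = (2 : ℝ)⁻¹ • mv R₀ p₀ + ((2 : ℝ)⁻¹ * lam₀) • t₀ + ((2 : ℝ)⁻¹ * lam₀) • l₀)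
    (he₀ : e₀ = reprojErr R₀ t₀ l₀ p₀)
    (hw₀ : w₀ = ρ' (‖e₀‖ ^ 2))
    (ha₀ : a₀ = (1 / 2) * ρ (‖e₀‖ ^ 2) - (1 / 2) * ρ' (‖e₀‖ ^ 2) * ‖e₀‖ ^ 2) :
    (∀ (R : Matrix (Fin 3) (Fin 3) ℝ) (t l : EuclideanSpace ℝ (Fin 3)),
      Rᵀ * R = 1 → R.det = 1 → l ≠ t →
      (1 / 2) * ρ (‖reprojErr R t l p₀‖ ^ 2)
        ≤ w₀ * ‖mv R p₀ + lam₀ • t - g₀‖ ^ 2 + (1 / 2) * a₀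
          + (w₀ * ‖lam₀ • l - g₀‖ ^ 2 + (1 / 2) * a₀)) ∧
    (1 / 2) * ρ (‖reprojErr R₀ t₀ l₀ p₀‖ ^ 2)
        = w₀ * ‖mv R₀ p₀ + lam₀ • t₀ - g₀‖ ^ 2 + (1 / 2) * a₀
          + (w₀ * ‖lam₀ • l₀ - g₀‖ ^ 2 + (1 / 2) * a₀) := by
  set s₀ : ℝ := ‖e₀‖ ^ 2 with hs₀def
  have hs₀ : 0 ≤ s₀ := by positivity
  have htan : ∀ s, 0 ≤ s → ρ s ≤ ρ s₀ + w₀ * (s - s₀) := by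
    intro s hs
    rw [hw₀]
    exact tangent ρ ρ' hdiff hconc hs hs₀
  have hw₀nn : 0 ≤ w₀ := by
    have h1 := htan (s₀ + 1) (by linarith)
    have h2 := hmono (Set.mem_Ici.mpr hs₀) (Set.mem_Ici.mpr (by linarith : (0:ℝ) ≤ s₀ + 1))
      (by linarith)
    nlinarith
  have ha : a₀ = (1/2) * ρ s₀ - (1/2) * w₀ * s₀ := by rw [ha₀, hw₀]
  -- equality facts at the base point
  have hu₀ : l₀ - t₀ ≠ 0 := sub_ne_zero_of_ne h₀
  have hd0 : ‖reprojErr R₀ t₀ l₀ p₀‖ ^ 2 = ‖mv R₀ p₀ - lam₀ • (l₀ - t₀)‖ ^ 2 := by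
    rw [reproj_norm R₀ hR₀, hlam₀]
  constructor
  · intro R t l hR _ hlt
    have hu : l - t ≠ 0 := sub_ne_zero_of_ne hlt
    set A : ℝ := ‖mv R p₀ + lam₀ • t - g₀‖ with hAdef
    set B : ℝ := ‖lam₀ • l - g₀‖ with hBdef
    set s : ℝ := ‖reprojErr R t l p₀‖ ^ 2 with hsdef
    have hs : (0:ℝ) ≤ s := by positivity
    have hle1 : s ≤ ‖mv R p₀ - lam₀ • (l - t)‖ ^ 2 := by
      rw [hsdef, reproj_norm R hR]
      exact proj_min (l - t) (mv R p₀) hu lam₀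
    have hsplit : mv R p₀ - lam₀ • (l - t)
        = (mv R p₀ + lam₀ • t - g₀) - (lam₀ • l - g₀) := by
      rw [smul_sub]; abel
    have hle2 : ‖mv R p₀ - lam₀ • (l - t)‖ ^ 2 ≤ 2 * A ^ 2 + 2 * B ^ 2 := by
      rw [hsplit]
      exact sq_split (norm_sub_le _ _) (norm_nonneg _) (norm_nonneg _) (norm_nonneg _)
    have hC : s ≤ 2 * A ^ 2 + 2 * B ^ 2 := le_trans hle1 hle2
    have h3 := htan s hs
    exact combine h3 hC hw₀nn ha
  · have hA : mv R₀ p₀ + lam₀ • t₀ - g₀ = (2:ℝ)⁻¹ • (mv R₀ p₀ - lam₀ • (l₀ - t₀)) := by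
      rw [hg₀]
      ext i
      simp only [PiLp.add_apply, PiLp.sub_apply, PiLp.smul_apply, PiLp.neg_apply, smul_eq_mul]
      ring
    have hB : lam₀ • l₀ - g₀ = -((2:ℝ)⁻¹) • (mv R₀ p₀ - lam₀ • (l₀ - t₀)) := by
      rw [hg₀]
      ext i
      simp only [PiLp.add_apply, PiLp.sub_apply, PiLp.smul_apply, PiLp.neg_apply, smul_eq_mul]
      ring
    have hnA : ‖mv R₀ p₀ + lam₀ • t₀ - g₀‖ ^ 2
        = (1/4) * ‖mv R₀ p₀ - lam₀ • (l₀ - t₀)‖ ^ 2 := by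
      rw [hA, norm_smul]
      norm_num
      ring
    have hnB : ‖lam₀ • l₀ - g₀‖ ^ 2
        = (1/4) * ‖mv R₀ p₀ - lam₀ • (l₀ - t₀)‖ ^ 2 := by
      rw [hB, norm_smul]
      norm_num
      ring
    have hs0eq : s₀ = ‖mv R₀ p₀ - lam₀ • (l₀ - t₀)‖ ^ 2 := by
      rw [hs₀def, he₀, hd0]
    rw [hnA, hnB, hd0, ← hs0eq, ha]
    ring
end

section
/- Let F : X → ℝ be a function on a metric space, bounded below, and let η ∈ (0, 1]. Given a sequence (x_k) with F(x_{k+1}) ≤ F̄_k for all k, where F̄_{−1} = F(x₀) and F̄_k = (1−η)·F̄_{k−1} + η·F(x_k) for k ≥ 0, then (F̄_k) is nonincreasing and converges, and F(x_k) also converges to the same limit. -/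
theorem stmt12 {X : Type*} [MetricSpace X] (F : X → ℝ) (m : ℝ)
    (hbdd : ∀ x, m ≤ F x) (η : ℝ) (hη : η ∈ Set.Ioc (0 : ℝ) 1)
    (x : ℕ → X) (Fbar : ℕ → ℝ)
    (h0 : Fbar 0 = F (x 0))
    (hrec : ∀ k : ℕ, Fbar (k + 1) = (1 - η) * Fbar k + η * F (x (k + 1)))
    (hdec : ∀ k : ℕ, F (x (k + 1)) ≤ Fbar k) :
    Antitone Fbar ∧ ∃ c : ℝ, Filter.Tendsto Fbar Filter.atTop (nhds c) ∧
      Filter.Tendsto (fun k => F (x k)) Filter.atTop (nhds c) := by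
  obtain ⟨hη0, hη1⟩ := hη
  have h1η : (0:ℝ) ≤ 1 - η := by linarith
  have hm : ∀ k, m ≤ Fbar k := by
    intro k
    induction k with
    | zero => rw [h0]; exact hbdd _
    | succ n ih =>
      rw [hrec n]
      nlinarith [hbdd (x (n+1))]
  have anti : Antitone Fbar := by
    apply antitone_nat_of_succ_le
    intro n
    rw [hrec n]
    nlinarith [hdec n]
  have hbb : BddBelow (Set.range Fbar) := ⟨m, by rintro _ ⟨k, rfl⟩; exact hm k⟩
  have hc : Filter.Tendsto Fbar Filter.atTop (nhds (⨅ i, Fbar i)) :=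
    tendsto_atTop_ciInf anti hbb
  set c := ⨅ i, Fbar i
  refine ⟨anti, c, hc, ?_⟩
  have hshift : Filter.Tendsto (fun k => Fbar (k + 1)) Filter.atTop (nhds c) :=
    hc.comp (Filter.tendsto_add_atTop_nat 1)
  have h2 : Filter.Tendsto (fun k => (Fbar (k + 1) - (1 - η) * Fbar k) / η)
      Filter.atTop (nhds ((c - (1 - η) * c) / η)) :=
    ((hshift.sub (hc.const_mul _)).div_const η)
  have heq : (fun k => (Fbar (k + 1) - (1 - η) * Fbar k) / η) = fun k => F (x (k + 1)) := by
    funext k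
    rw [hrec k]
    field_simp
    ring
  have hval : (c - (1 - η) * c) / η = c := by
    field_simp
    ring
  rw [heq, hval] at h2
  rw [← Filter.tendsto_add_atTop_iff_nat 1]
  exact h2
end

section
/- Let M ∈ ℝ^{3×3} with singular value decomposition M = UΣVᵀ where U, V are orthogonal and Σ = diag(σ₁, σ₂, σ₃) with σ₁ ≥ σ₂ ≥ σ₃ ≥ 0. If σ₂ > 0 (so M has rank ≥ 2), then arg min over R ∈ SO(3) of ‖R − M‖² (Frobenius norm) is attained at R* = U·diag(1, 1, det(UVᵀ))·Vᵀ, and this minimizer is unique when σ₂ + σ₃·det(UVᵀ) > 0. -/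
/-!
Writing `Q = Uᵀ R V`, which is orthogonal with `det Q = det (U Vᵀ)` whenever `R ∈ SO(3)`, one has
`‖R - M‖² = 3 - 2 ∑ σᵢ Qᵢᵢ + ‖M‖²`, so the problem is to maximize `∑ σᵢ Qᵢᵢ`. The entries of an
orthogonal matrix are at most `1`, and if `det Q = -1` also `tr Q ≤ 1`, because
`(1 - tr Q) (3 + tr Q) = ‖Q - Qᵀ‖² / 2`. Splitting `∑ σᵢ (1 - Qᵢᵢ)` into nonnegative terms along
the decreasing `σ` gives `∑ σᵢ Qᵢᵢ ≤ σ₁ + σ₂ + σ₃ det Q`, with equality at `Q = diag (1, 1, det Q)`;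
when `σ₂ + σ₃ det Q > 0` equality forces `Q₁₁ = Q₂₂ = 1`, and orthogonality then pins down `Q`.
-/

open Matrix

/-- The squared Frobenius norm of a `3 × 3` real matrix. -/
def frob2 (A : Matrix (Fin 3) (Fin 3) ℝ) : ℝ := ∑ i : Fin 3, ∑ j : Fin 3, (A i j) ^ 2

namespace Matrix

variable {n : Type*} [Fintype n] [DecidableEq n]

theorem det_mul_self_of_transpose_mul_self {R : Type*} [CommRing R] {Q : Matrix n n R}
    (hQ : Qᵀ * Q = 1) : Q.det * Q.det = 1 := by
  simpa only [det_mul, det_transpose, det_one] using congrArg det hQ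

theorem det_eq_one_or_neg_one_of_transpose_mul_self {R : Type*} [CommRing R] [NoZeroDivisors R]
    {Q : Matrix n n R} (hQ : Qᵀ * Q = 1) : Q.det = 1 ∨ Q.det = -1 :=
  mul_self_eq_one_iff.mp (det_mul_self_of_transpose_mul_self hQ)

theorem diagonal_transpose_mul_self {R : Type*} [CommRing R] {v : n → R}
    (hv : ∀ i, v i * v i = 1) : (diagonal v)ᵀ * diagonal v = 1 := by
  rw [diagonal_transpose, diagonal_mul_diagonal, ← diagonal_one]
  exact congrArg diagonal (funext hv)

section Conjugation

variable {R : Type*} [CommRing R] {U V : Matrix n n R}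

theorem det_transpose_mul_mul (U Q V : Matrix n n R) :
    (Uᵀ * Q * V).det = (U * Vᵀ).det * Q.det := by
  simp only [det_mul, det_transpose]
  ring

theorem det_mul_mul_transpose (U Q V : Matrix n n R) :
    (U * Q * Vᵀ).det = (U * Vᵀ).det * Q.det := by
  simp only [det_mul, det_transpose]
  ring

theorem trace_transpose_mul_svd (Q U V : Matrix n n R) (σ : n → R) :
    (Qᵀ * (U * diagonal σ * Vᵀ)).trace = ∑ i, σ i * (Uᵀ * Q * V) i i := by
  have hcycle : Qᵀ * (U * diagonal σ * Vᵀ) = (Qᵀ * U * diagonal σ) * Vᵀ := by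
    simp only [Matrix.mul_assoc]
  rw [hcycle, trace_mul_comm, ← Matrix.mul_assoc, ← transpose_transpose U, ← transpose_mul,
    ← transpose_mul, transpose_transpose]
  simp only [trace, diag_apply, mul_diagonal, transpose_apply, mul_comm]

variable (hU : Uᵀ * U = 1) (hV : Vᵀ * V = 1)
include hU hV

theorem det_mul_transpose_mul_self : (U * Vᵀ).det * (U * Vᵀ).det = 1 := by
  rw [det_mul, det_transpose, mul_mul_mul_comm, det_mul_self_of_transpose_mul_self hU,
    det_mul_self_of_transpose_mul_self hV, one_mul]

theorem transpose_mul_mul_mul_transpose (A : Matrix n n R) : Uᵀ * (U * A * Vᵀ) * V = A := by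
  simp only [Matrix.mul_assoc, hV, Matrix.mul_one]
  rw [← Matrix.mul_assoc, hU, Matrix.one_mul]

theorem mul_transpose_mul_mul_transpose (A : Matrix n n R) : U * (Uᵀ * A * V) * Vᵀ = A := by
  simp only [Matrix.mul_assoc, mul_eq_one_comm.mp hV, Matrix.mul_one]
  rw [← Matrix.mul_assoc, mul_eq_one_comm.mp hU, Matrix.one_mul]

theorem transpose_mul_self_transpose_mul_mul {Q : Matrix n n R} (hQ : Qᵀ * Q = 1) :
    (Uᵀ * Q * V)ᵀ * (Uᵀ * Q * V) = 1 := by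
  simp only [transpose_mul, transpose_transpose, Matrix.mul_assoc]
  rw [← Matrix.mul_assoc U, mul_eq_one_comm.mp hU, Matrix.one_mul, ← Matrix.mul_assoc Qᵀ, hQ,
    Matrix.one_mul, hV]

theorem transpose_mul_self_mul_mul_transpose {Q : Matrix n n R} (hQ : Qᵀ * Q = 1) :
    (U * Q * Vᵀ)ᵀ * (U * Q * Vᵀ) = 1 := by
  have hUt : Uᵀᵀ * Uᵀ = 1 := by rw [transpose_transpose]; exact mul_eq_one_comm.mp hU
  have hVt : Vᵀᵀ * Vᵀ = 1 := by rw [transpose_transpose]; exact mul_eq_one_comm.mp hV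
  simpa only [transpose_transpose] using transpose_mul_self_transpose_mul_mul hUt hVt hQ

end Conjugation

section Real

variable {Q : Matrix n n ℝ}

theorem sum_sq_apply_of_transpose_mul_self (hQ : Qᵀ * Q = 1) (j : n) : ∑ k, Q k j ^ 2 = 1 := by
  simpa [mul_apply, sq] using congrFun (congrFun hQ j) j

theorem abs_apply_le_one_of_transpose_mul_self (hQ : Qᵀ * Q = 1) (i j : n) : |Q i j| ≤ 1 := by
  rw [← sq_le_one_iff_abs_le_one, ← sum_sq_apply_of_transpose_mul_self hQ j]
  exact Finset.single_le_sum (fun k _ ↦ sq_nonneg (Q k j)) (Finset.mem_univ i)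

theorem apply_le_one_of_transpose_mul_self (hQ : Qᵀ * Q = 1) (i j : n) : Q i j ≤ 1 :=
  (abs_le.mp (abs_apply_le_one_of_transpose_mul_self hQ i j)).2

theorem apply_eq_zero_of_transpose_mul_self {i j k : n} (hQ : Qᵀ * Q = 1) (hij : Q i j = 1)
    (hki : k ≠ i) : Q k j = 0 := by
  have h := sum_sq_apply_of_transpose_mul_self hQ j
  rw [← Finset.add_sum_erase _ _ (Finset.mem_univ i), hij, one_pow, add_eq_left] at h
  have hk := (Finset.sum_eq_zero_iff_of_nonneg fun _ _ ↦ sq_nonneg _).mp h k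
    (Finset.mem_erase.mpr ⟨hki, Finset.mem_univ k⟩)
  exact pow_eq_zero_iff two_ne_zero |>.mp hk

theorem apply_eq_zero_of_transpose_mul_self' {i j k : n} (hQ : Qᵀ * Q = 1) (hij : Q i j = 1)
    (hkj : k ≠ j) : Q i k = 0 := by
  have hQt : Qᵀᵀ * Qᵀ = 1 := by rw [transpose_transpose]; exact mul_eq_one_comm.mp hQ
  exact apply_eq_zero_of_transpose_mul_self (Q := Qᵀ) hQt hij hkj

end Real

section FinThree

variable {Q : Matrix (Fin 3) (Fin 3) ℝ}

theorem trace_le_one_of_det_eq_neg_one (hQ : Qᵀ * Q = 1) (hdet : Q.det = -1) : Q.trace ≤ 1 := by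
  have col (i j : Fin 3) :
      Q 0 i * Q 0 j + Q 1 i * Q 1 j + Q 2 i * Q 2 j = (1 : Matrix (Fin 3) (Fin 3) ℝ) i j := by
    simpa [mul_apply, Fin.sum_univ_three] using congrFun (congrFun hQ i) j
  have c00 := col 0 0
  have c11 := col 1 1
  have c22 := col 2 2
  have c01 := col 0 1
  have c02 := col 0 2
  have c12 := col 1 2
  simp only [one_apply_eq, one_apply_ne, ne_eq, Fin.reduceEq, not_false_eq_true]
    at c00 c11 c22 c01 c02 c12
  rw [det_fin_three] at hdet
  have key : (1 - Q.trace) * (3 + Q.trace)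
      = (Q 1 0 - Q 0 1) ^ 2 + (Q 0 2 - Q 2 0) ^ 2 + (Q 2 1 - Q 1 2) ^ 2 := by
    rw [trace_fin_three]
    linear_combination
      (-1 + 2 * (Q 1 1 * Q 2 2 - Q 1 2 * Q 2 1)) * c00 +
      (-1 + 2 * (Q 0 0 * Q 2 2 - Q 0 2 * Q 2 0)) * c11 +
      (-1 + 2 * (Q 0 0 * Q 1 1 - Q 0 1 * Q 1 0)) * c22 +
      2 * (-(Q 1 0 * Q 2 2 - Q 1 2 * Q 2 0) + -(Q 0 1 * Q 2 2 - Q 0 2 * Q 2 1)) * c01 +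
      2 * ((Q 1 0 * Q 2 1 - Q 1 1 * Q 2 0) + (Q 0 1 * Q 1 2 - Q 0 2 * Q 1 1)) * c02 +
      2 * (-(Q 0 0 * Q 2 1 - Q 0 1 * Q 2 0) + -(Q 0 0 * Q 1 2 - Q 0 2 * Q 1 0)) * c12 +
      (-2 * (Q 0 0 + Q 1 1 + Q 2 2)) * hdet
  have hnonneg : 0 ≤ (1 - Q.trace) * (3 + Q.trace) := by rw [key]; positivity
  by_contra! htr
  exact (mul_neg_of_neg_of_pos (by linarith) (by linarith)).not_ge hnonneg

theorem eq_diagonal_of_apply_zero_zero_eq_one_of_apply_one_one_eq_one (hQ : Qᵀ * Q = 1)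
    (h00 : Q 0 0 = 1) (h11 : Q 1 1 = 1) : Q = diagonal ![1, 1, Q.det] := by
  have h10 : Q 1 0 = 0 := apply_eq_zero_of_transpose_mul_self hQ h00 (by decide)
  have h20 : Q 2 0 = 0 := apply_eq_zero_of_transpose_mul_self hQ h00 (by decide)
  have h01 : Q 0 1 = 0 := apply_eq_zero_of_transpose_mul_self hQ h11 (by decide)
  have h21 : Q 2 1 = 0 := apply_eq_zero_of_transpose_mul_self hQ h11 (by decide)
  have h02 : Q 0 2 = 0 := apply_eq_zero_of_transpose_mul_self' hQ h00 (by decide)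
  have h12 : Q 1 2 = 0 := apply_eq_zero_of_transpose_mul_self' hQ h11 (by decide)
  have h22 : Q 2 2 = Q.det := by
    rw [det_fin_three, h00, h11, h10, h20, h01, h21, h02, h12]; ring
  ext i j
  fin_cases i <;> fin_cases j <;> simp [h00, h11, h22, h10, h20, h01, h21, h02, h12]

variable {σ : Fin 3 → ℝ}

theorem sum_mul_diag_le (h01 : σ 1 ≤ σ 0) (h12 : σ 2 ≤ σ 1) (h2 : 0 ≤ σ 2) (hQ : Qᵀ * Q = 1) :
    ∑ i, σ i * Q i i ≤ σ 0 + σ 1 + σ 2 * Q.det := by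
  have hle := apply_le_one_of_transpose_mul_self hQ
  have h0 := mul_nonneg (sub_nonneg.mpr h01) (sub_nonneg.mpr (hle 0 0))
  have h1 := mul_nonneg (sub_nonneg.mpr h12)
    (by linarith [hle 0 0, hle 1 1] : 0 ≤ 2 - Q 0 0 - Q 1 1)
  rw [Fin.sum_univ_three]
  rcases det_eq_one_or_neg_one_of_transpose_mul_self hQ with hdet | hdet <;> rw [hdet]
  · nlinarith [mul_nonneg h2 (by linarith [hle 0 0, hle 1 1, hle 2 2] :
      0 ≤ 3 - Q 0 0 - Q 1 1 - Q 2 2)]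
  · have htr := trace_le_one_of_det_eq_neg_one hQ hdet
    rw [trace_fin_three] at htr
    nlinarith [mul_nonneg h2 (by linarith : 0 ≤ 1 - Q 0 0 - Q 1 1 - Q 2 2)]

theorem eq_diagonal_of_sum_mul_diag_eq (h01 : σ 1 ≤ σ 0) (h12 : σ 2 ≤ σ 1) (h2 : 0 ≤ σ 2)
    (hQ : Qᵀ * Q = 1) (hpos : 0 < σ 1 + σ 2 * Q.det)
    (heq : ∑ i, σ i * Q i i = σ 0 + σ 1 + σ 2 * Q.det) : Q = diagonal ![1, 1, Q.det] := by
  have hle := apply_le_one_of_transpose_mul_self hQ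
  rw [Fin.sum_univ_three] at heq
  suffices Q 0 0 = 1 ∧ Q 1 1 = 1 from
    eq_diagonal_of_apply_zero_zero_eq_one_of_apply_one_one_eq_one hQ this.1 this.2
  rcases det_eq_one_or_neg_one_of_transpose_mul_self hQ with hdet | hdet <;>
    rw [hdet] at heq hpos
  · have hσ1 : 0 < σ 1 := by linarith
    have t0 := mul_nonneg (by linarith : 0 ≤ σ 0) (sub_nonneg.mpr (hle 0 0))
    have t1 := mul_nonneg hσ1.le (sub_nonneg.mpr (hle 1 1))
    have t2 := mul_nonneg h2 (sub_nonneg.mpr (hle 2 2))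
    have e0 : σ 0 * (1 - Q 0 0) = 0 := by linarith
    have e1 : σ 1 * (1 - Q 1 1) = 0 := by linarith
    constructor
    · linarith [(mul_eq_zero.mp e0).resolve_left (by linarith)]
    · linarith [(mul_eq_zero.mp e1).resolve_left hσ1.ne']
  · have htr := trace_le_one_of_det_eq_neg_one hQ hdet
    rw [trace_fin_three] at htr
    have hsum : 2 ≤ Q 0 0 + Q 1 1 := by
      nlinarith [mul_nonneg (sub_nonneg.mpr h01) (sub_nonneg.mpr (hle 0 0)),
        mul_nonneg h2 (by linarith : 0 ≤ 1 - Q 0 0 - Q 1 1 - Q 2 2)]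
    exact ⟨by linarith [hle 1 1, hle 0 0], by linarith [hle 1 1, hle 0 0]⟩

end FinThree

end Matrix

theorem frob2_eq_trace (A : Matrix (Fin 3) (Fin 3) ℝ) : frob2 A = (Aᵀ * A).trace := by
  simp only [frob2, trace, diag_apply, mul_apply, transpose_apply, sq]
  exact Finset.sum_comm

theorem frob2_sub_of_transpose_mul_self {R : Matrix (Fin 3) (Fin 3) ℝ} (hR : Rᵀ * R = 1)
    (M : Matrix (Fin 3) (Fin 3) ℝ) : frob2 (R - M) = 3 - 2 * (Rᵀ * M).trace + frob2 M := by
  have hswap : (Mᵀ * R).trace = (Rᵀ * M).trace := by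
    rw [← trace_transpose, transpose_mul, transpose_transpose]
  rw [frob2_eq_trace, frob2_eq_trace M, transpose_sub, sub_mul, mul_sub, mul_sub, hR, trace_sub,
    trace_sub, trace_sub, trace_one, hswap, Fintype.card_fin]
  ring

theorem frob2_sub_svd {U V Q : Matrix (Fin 3) (Fin 3) ℝ} (hQ : Qᵀ * Q = 1) (σ : Fin 3 → ℝ) :
    frob2 (Q - U * diagonal σ * Vᵀ) =
      3 - 2 * ∑ i, σ i * (Uᵀ * Q * V) i i + frob2 (U * diagonal σ * Vᵀ) := by
  rw [frob2_sub_of_transpose_mul_self hQ, trace_transpose_mul_svd]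

theorem stmt19_general (U V : Matrix (Fin 3) (Fin 3) ℝ) (σ : Fin 3 → ℝ)
    (hU : Uᵀ * U = 1) (hV : Vᵀ * V = 1)
    (hσ01 : σ 1 ≤ σ 0) (hσ12 : σ 2 ≤ σ 1) (hσ2 : 0 ≤ σ 2)
    (M : Matrix (Fin 3) (Fin 3) ℝ) (hM : M = U * Matrix.diagonal σ * Vᵀ)
    (Rstar : Matrix (Fin 3) (Fin 3) ℝ)
    (hRstar : Rstar = U * Matrix.diagonal ![1, 1, (U * Vᵀ).det] * Vᵀ) :
    (Rstarᵀ * Rstar = 1 ∧ Rstar.det = 1) ∧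
    (∀ R : Matrix (Fin 3) (Fin 3) ℝ, Rᵀ * R = 1 → R.det = 1 →
      frob2 (Rstar - M) ≤ frob2 (R - M)) ∧
    (0 < σ 1 + σ 2 * (U * Vᵀ).det →
      ∀ R : Matrix (Fin 3) (Fin 3) ℝ, Rᵀ * R = 1 → R.det = 1 →
        frob2 (R - M) = frob2 (Rstar - M) → R = Rstar) := by
  subst hM hRstar
  set d := (U * Vᵀ).det
  have hdd : d * d = 1 := det_mul_transpose_mul_self hU hV
  have hD : (diagonal ![1, 1, d])ᵀ * diagonal ![1, 1, d] = 1 :=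
    diagonal_transpose_mul_self fun i ↦ by fin_cases i <;> simp [hdd]
  have hstar : frob2 (U * diagonal ![1, 1, d] * Vᵀ - U * diagonal σ * Vᵀ) =
      3 - 2 * (σ 0 + σ 1 + σ 2 * d) + frob2 (U * diagonal σ * Vᵀ) := by
    rw [frob2_sub_svd (transpose_mul_self_mul_mul_transpose hU hV hD),
      transpose_mul_mul_mul_transpose hU hV]
    simp [Fin.sum_univ_three]
  have hconj (R : Matrix (Fin 3) (Fin 3) ℝ) (hR : Rᵀ * R = 1) (hRdet : R.det = 1) :
      (Uᵀ * R * V)ᵀ * (Uᵀ * R * V) = 1 ∧ (Uᵀ * R * V).det = d :=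
    ⟨transpose_mul_self_transpose_mul_mul hU hV hR, by rw [det_transpose_mul_mul, hRdet, mul_one]⟩
  refine ⟨⟨transpose_mul_self_mul_mul_transpose hU hV hD, ?_⟩, fun R hR hRdet ↦ ?_,
    fun hpos R hR hRdet hRmin ↦ ?_⟩
  · rw [det_mul_mul_transpose, det_diagonal, Fin.prod_univ_three]
    simpa [-det_mul] using hdd
  · obtain ⟨hQ, hQdet⟩ := hconj R hR hRdet
    have hle := sum_mul_diag_le hσ01 hσ12 hσ2 hQ
    rw [hstar, frob2_sub_svd hR, ← hQdet]
    linarith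
  · obtain ⟨hQ, hQdet⟩ := hconj R hR hRdet
    rw [hstar, frob2_sub_svd hR, ← hQdet] at hRmin
    have hQeq := eq_diagonal_of_sum_mul_diag_eq hσ01 hσ12 hσ2 hQ (hQdet ▸ hpos) (by linarith)
    rw [← mul_transpose_mul_mul_transpose hU hV R, hQeq, hQdet]

theorem stmt19 (U V : Matrix (Fin 3) (Fin 3) ℝ) (σ : Fin 3 → ℝ)
    (hU : Uᵀ * U = 1) (hV : Vᵀ * V = 1)
    (hσ01 : σ 1 ≤ σ 0) (hσ12 : σ 2 ≤ σ 1) (hσ2 : 0 ≤ σ 2) (hσ1pos : 0 < σ 1)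
    (M : Matrix (Fin 3) (Fin 3) ℝ) (hM : M = U * Matrix.diagonal σ * Vᵀ)
    (Rstar : Matrix (Fin 3) (Fin 3) ℝ)
    (hRstar : Rstar = U * Matrix.diagonal ![1, 1, (U * Vᵀ).det] * Vᵀ) :
    (Rstarᵀ * Rstar = 1 ∧ Rstar.det = 1) ∧
    (∀ R : Matrix (Fin 3) (Fin 3) ℝ, Rᵀ * R = 1 → R.det = 1 →
      frob2 (Rstar - M) ≤ frob2 (R - M)) ∧
    (0 < σ 1 + σ 2 * (U * Vᵀ).det →
      ∀ R : Matrix (Fin 3) (Fin 3) ℝ, Rᵀ * R = 1 → R.det = 1 →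
        frob2 (R - M) = frob2 (Rstar - M) → R = Rstar) :=
  stmt19_general U V σ hU hV hσ01 hσ12 hσ2 M hM Rstar hRstar
end
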